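/- Let C be the indiscrete category on two objects (two objects, with exactly one morphism between any ordered pair of objects; in particular the two objects are connected by a unique isomorphism). Let Q_C be the coequalizer in Cat of the pair of functors d0, d1 : ∐_{σ} 1 ⇉ C indexed by the isomorphisms of C, where d0 and d1 pick the domain and codomain of each isomorphism. Then Q_C is isomorphic, as a category, to the one-object category associated with the group of integers (ℤ, +); in particular, the skeletal reflection of C is not equivalent to the terminal category. -/

import Mathlib

open CategoryTheory Limits

/-- The indiscrete category on two objects: two objects with exactly one morphism
between any ordered pair of objects. -/
def TwoIndiscrete : Type := Bool

instance : Category.{0} TwoIndiscrete where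
  Hom _ _ := PUnit
  id _ := PUnit.unit
  comp _ _ := PUnit.unit

/-- The set of isomorphisms of `C`, used to index a copower of the terminal category:
this coproduct of copies of the terminal category `1` is the discrete category on the
set of isomorphisms of `C`. -/
def IsoIndex (C : Type) [Category.{0} C] : Type := Σ X Y : C, X ≅ Y

/-- The functor `d0` sending the object of the copy of `1` indexed by an isomorphism
`σ` of `C` to the domain of `σ`. -/
def isoDom (C : Type) [Category.{0} C] :
    Cat.of (Discrete (IsoIndex C)) ⟶ Cat.of C :=
  (Discrete.functor (C := C) fun σ : IsoIndex C => σ.1).toCatHom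

/-- The functor `d1` sending the object of the copy of `1` indexed by an isomorphism
`σ` of `C` to the codomain of `σ`. -/
def isoCod (C : Type) [Category.{0} C] :
    Cat.of (Discrete (IsoIndex C)) ⟶ Cat.of C :=
  (Discrete.functor (C := C) fun σ : IsoIndex C => σ.2.1).toCatHom

/-!
A cofork under `d0, d1` is a functor `G` out of `C` identifying its two objects `zero` and `one`.
As `C` is indiscrete, such a `G` is determined by the single automorphism `G(zero ⟶ one)` of the
common image, and every automorphism arises this way. So `G` factors uniquely through the functor
`C ⥤ Bℤ` sending `X ⟶ Y` to `height Y - height X`, under which `zero ⟶ one` goes to the generator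
of `ℤ`: the coequalizer is `Bℤ`, which is not equivalent to the terminal category since `ℤ` is
nontrivial.
-/

theorem isoDom_comp_eq_isoCod_comp {C D : Type} [Category.{0} C] [Category.{0} D] (F : C ⥤ D)
    (hF : ∀ X Y : C, (X ≅ Y) → F.obj X = F.obj Y) :
    isoDom C ≫ F.toCatHom = isoCod C ≫ F.toCatHom :=
  Cat.ext <| Discrete.functor_ext fun σ => hF _ _ σ.2.2

theorem CategoryTheory.Limits.Cofork.π_obj_eq_of_iso {C : Type} [Category.{0} C]
    (s : Cofork (isoDom C) (isoCod C)) {X Y : C} (e : X ≅ Y) :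
    s.π.toFunctor.obj X = s.π.toFunctor.obj Y :=
  congrArg (fun F => F.toFunctor.obj ⟨⟨X, Y, e⟩⟩) s.condition

namespace CategoryTheory.SingleObj

theorem functor_ext_int {D : Type*} [Category* D] {F₁ F₂ : SingleObj (Multiplicative ℤ) ⥤ D}
    (h : F₁.obj (star _) = F₂.obj (star _))
    (h₁ : F₁.map (X := star _) (Y := star _) (Multiplicative.ofAdd 1) =
      eqToHom h ≫ F₂.map (X := star _) (Y := star _) (Multiplicative.ofAdd 1) ≫ eqToHom h.symm) :
    F₁ = F₂ := by
  have : (F₁.mapEnd _).comp (toEnd _).toMonoidHom =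
      ((eqToIso h.symm).conj.toMonoidHom.comp (F₂.mapEnd _)).comp (toEnd _).toMonoidHom :=
    MonoidHom.ext_mint h₁
  exact Functor.ext (fun _ => h) fun _ _ n => DFunLike.congr_fun this n

theorem not_nonempty_equivalence_discrete_punit (M : Type*) [Monoid M] [Nontrivial M] :
    ¬ Nonempty (SingleObj M ≌ Discrete PUnit) := fun ⟨E⟩ => by
  obtain ⟨x, y, hxy⟩ := exists_pair_ne M
  exact hxy <| E.functor.map_injective (X := star M) (Y := star M) (Subsingleton.elim _ _)

end CategoryTheory.SingleObj

namespace TwoIndiscrete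

def zero : TwoIndiscrete := false

def one : TwoIndiscrete := true

theorem eq_zero_or_eq_one (X : TwoIndiscrete) : X = zero ∨ X = one :=
  (Bool.eq_false_or_eq_true X).symm

def iso (X Y : TwoIndiscrete) : X ≅ Y := ⟨⟨⟩, ⟨⟩, rfl, rfl⟩

theorem iso_self (X : TwoIndiscrete) : iso X X = Iso.refl X := rfl

def height (X : TwoIndiscrete) : ℤ := Bool.toNat X

@[simp]
theorem height_zero : height zero = 0 := rfl

@[simp]
theorem height_one : height one = 1 := rfl

def toInt : TwoIndiscrete ⥤ SingleObj (Multiplicative ℤ) :=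
  SingleObj.differenceFunctor fun X => Multiplicative.ofAdd (height X)

section Lift

variable {D : Type*} [Category* D] (G : TwoIndiscrete ⥤ D) (hG : G.obj zero = G.obj one)

def monodromy : Aut (G.obj zero) :=
  G.mapIso (iso zero one) ≪≫ eqToIso hG.symm

def lift : SingleObj (Multiplicative ℤ) ⥤ D :=
  SingleObj.functor <| (Aut.toEnd _).comp <| zpowersHom _ (monodromy G hG)

theorem toInt_comp_lift_map {X Y : TwoIndiscrete} (f : X ⟶ Y) :
    (toInt ⋙ lift G hG).map f = (monodromy G hG ^ (height Y - height X)).hom :=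
  rfl

theorem toInt_comp_lift : toInt ⋙ lift G hG = G := by
  have obj_eq (X : TwoIndiscrete) : (toInt ⋙ lift G hG).obj X = G.obj X := by
    obtain rfl | rfl := eq_zero_or_eq_one X
    exacts [rfl, hG]
  refine CategoryTheory.Functor.ext obj_eq fun X Y f => ?_
  obtain rfl : f = (iso X Y).hom := rfl
  rw [toInt_comp_lift_map]
  obtain rfl | rfl := eq_zero_or_eq_one X <;> obtain rfl | rfl := eq_zero_or_eq_one Y
  all_goals
    simp only [height_zero, height_one, sub_self, sub_zero, zero_sub, zpow_zero, zpow_one,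
      zpow_neg, Aut.Aut_inv_def]
    simp [monodromy, iso_self]
  -- The `eqToHom`s left at `zero` are identities only up to unfolding `lift`, invisible to `simp`.
  · rfl
  · exact (Category.id_comp _).symm
  · exact congrArg (_ ≫ ·) (Category.comp_id _).symm
  · rfl

end Lift

theorem toInt_cancel {D : Type*} [Category* D] {F₁ F₂ : SingleObj (Multiplicative ℤ) ⥤ D}
    (h : toInt ⋙ F₁ = toInt ⋙ F₂) : F₁ = F₂ :=
  SingleObj.functor_ext_int (Functor.congr_obj h zero) (Functor.congr_hom h (iso zero one).hom)

def toIntCofork : Cofork (isoDom TwoIndiscrete) (isoCod TwoIndiscrete) :=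
  Cofork.ofπ toInt.toCatHom (isoDom_comp_eq_isoCod_comp toInt fun _ _ _ => rfl)

def isColimitToIntCofork : IsColimit toIntCofork :=
  Cofork.IsColimit.mk _
    (fun s => (lift s.π.toFunctor (s.π_obj_eq_of_iso (iso zero one))).toCatHom)
    (fun _ => Cat.ext (toInt_comp_lift _ _))
    (fun _ _ hm => Cat.ext <| toInt_cancel <|
      (congrArg Cat.Hom.toFunctor hm).trans (toInt_comp_lift _ _).symm)

end TwoIndiscrete

/-- Let `C` be the indiscrete category on two objects and let `Q_C = c.pt` be the
coequalizer in `Cat` of `d0, d1 : ∐_σ 1 ⇉ C` indexed by the isomorphisms of `C`.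
Then `Q_C` is isomorphic, as a category, to the one-object category associated with
the group `(ℤ, +)`; in particular this skeletal reflection of `C` is not equivalent to
the terminal category. -/
theorem skeletal_reflection_of_two_indiscrete (c : Cofork (isoDom TwoIndiscrete)
    (isoCod TwoIndiscrete)) (hc : IsColimit c) :
    Nonempty (c.pt ≅ Cat.of (SingleObj (Multiplicative ℤ))) ∧
      ¬ Nonempty ((c.pt : Type) ≌ Discrete PUnit) := by
  have e : c.pt ≅ Cat.of (SingleObj (Multiplicative ℤ)) :=
    hc.coconePointUniqueUpToIso TwoIndiscrete.isColimitToIntCofork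
  refine ⟨⟨e⟩, fun ⟨E⟩ => ?_⟩
  exact SingleObj.not_nonempty_equivalence_discrete_punit (Multiplicative ℤ)
    ⟨(Cat.equivOfIso e).symm.trans E⟩
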